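/- arXiv:2305.10291 — 5 statements merged into one kernel-verified Lean document; each statement's English description precedes it below -/
import Mathlib

section
/- Let X be a compact metric space and f : X → X a continuous surjective map. For each t ∈ [0,1) let G_t and R_t be homeomorphisms of X onto itself, and suppose that, as t → 1 from the left, G_t converges uniformly to a continuous map G : X → X and R_t converges uniformly to a continuous map R : X → X. Assume that f maps each fiber of G into a fiber of R, i.e. for all x, y ∈ X, G(x) = G(y) implies R(f(x)) = R(f(y)). Then the maps f_t := R_t ∘ f ∘ G_t⁻¹ converge uniformly, as t → 1 from the left, to a continuous map F : X → X satisfying F ∘ G = R ∘ f. -/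
/-!
Since `Glim` is a uniform limit of homeomorphisms of a compact space, it is surjective, hence a
closed quotient map; `Rlim ∘ f` is constant on its fibres and so descends to a continuous
`F` with `F ∘ Glim = Rlim ∘ f`. Then `F ∘ G t` and `R t ∘ f` both converge uniformly to the
same map, so they are uniformly close, and substituting `x = G t y` turns this into uniform
convergence of `R t ∘ f ∘ (G t)⁻¹` to `F`.
-/

open Filter Topology Function Set Uniformity

theorem TendstoUniformly.denseRange {ι α β : Type*} [UniformSpace β] {F : ι → α → β}
    {g : α → β} {l : Filter ι} (h : TendstoUniformly F g l)
    (hF : ∃ᶠ t in l, Surjective (F t)) : DenseRange g := by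
  intro z
  rw [mem_closure_iff_nhds_basis (nhds_basis_uniformity (𝓤 β).basis_sets)]
  intro U hU
  obtain ⟨t, ht, hsurj⟩ := ((h U hU).and_frequently hF).exists
  obtain ⟨x, rfl⟩ := hsurj z
  exact ⟨g x, mem_range_self x, ht x⟩

theorem TendstoUniformly.surjective {ι α β : Type*} [TopologicalSpace α] [CompactSpace α]
    [UniformSpace β] [T2Space β] {F : ι → α → β} {g : α → β} {l : Filter ι}
    (h : TendstoUniformly F g l) (hF : ∃ᶠ t in l, Surjective (F t)) (hg : Continuous g) :
    Surjective g := by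
  rw [← range_eq_univ, ← (isCompact_range hg).isClosed.closure_eq, (h.denseRange hF).closure_range]

theorem TendstoUniformly.comp_rightInverse {ι α β γ : Type*} [UniformSpace β] {l : Filter ι}
    {B : ι → α → β} {h : α → β} {F : γ → β} {e : ι → α → γ} {s : ι → γ → α}
    (hB : TendstoUniformly B h l) (hFe : TendstoUniformly (fun t y => F (e t y)) h l)
    (hs : ∀ t, RightInverse (s t) (e t)) :
    TendstoUniformly (fun t x => B t (s t x)) F l := by
  rw [tendstoUniformly_iff_tendsto] at *
  have hclose : Tendsto (fun q : ι × α => (F (e q.1 q.2), B q.1 q.2)) (l ×ˢ ⊤) (𝓤 β) :=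
    hFe.uniformity_symm.uniformity_trans hB
  have hsubst : Tendsto (fun q : ι × γ => (q.1, s q.1 q.2)) (l ×ˢ ⊤) (l ×ˢ ⊤) :=
    tendsto_fst.prodMk tendsto_top
  simpa [comp_def, hs _ _] using hclose.comp hsubst

theorem stmt0_general {X : Type*} [MetricSpace X] [CompactSpace X]
    (f : X → X) (hf : Continuous f)
    (G R : ℝ → (X ≃ₜ X)) (Glim Rlim : X → X)
    (hGlim : Continuous Glim) (hRlim : Continuous Rlim)
    (hG : TendstoUniformly (fun t x => G t x) Glim (𝓝[Set.Ico (0:ℝ) 1] 1))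
    (hR : TendstoUniformly (fun t x => R t x) Rlim (𝓝[Set.Ico (0:ℝ) 1] 1))
    (hfib : ∀ x y : X, Glim x = Glim y → Rlim (f x) = Rlim (f y)) :
    ∃ F : X → X, Continuous F ∧
      TendstoUniformly (fun t x => R t (f ((G t).symm x))) F (𝓝[Set.Ico (0:ℝ) 1] 1) ∧
      F ∘ Glim = Rlim ∘ f := by
  have := right_nhdsWithin_Ico_neBot (zero_lt_one' ℝ)
  have hGsurj : Surjective Glim :=
    hG.surjective (Frequently.of_forall fun t => (G t).surjective) hGlim
  have hq : IsQuotientMap (ContinuousMap.mk Glim hGlim) :=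
    hGlim.isClosedMap.isQuotientMap hGlim hGsurj
  have hfactor : FactorsThrough (Rlim ∘ f) Glim := fun x y => hfib x y
  set F := hq.lift ⟨Rlim ∘ f, hRlim.comp hf⟩ hfactor
  have hcomp : F ∘ Glim = Rlim ∘ f :=
    congrArg DFunLike.coe (hq.lift_comp ⟨Rlim ∘ f, hRlim.comp hf⟩ hfactor)
  refine ⟨F, F.continuous, ?_, hcomp⟩
  have hFG : TendstoUniformly (fun t y => F (G t y)) (Rlim ∘ f) (𝓝[Set.Ico (0:ℝ) 1] 1) :=
    hcomp ▸ (CompactSpace.uniformContinuous_of_continuous F.continuous).comp_tendstoUniformly hG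
  exact (hR.comp f).comp_rightInverse hFG fun t => (G t).apply_symm_apply

/-- Lemma on uniform convergence of conjugated maps.
Let `X` be a compact metric space and `f : X → X` a continuous surjective map.
For each `t ∈ [0,1)` let `G t` and `R t` be homeomorphisms of `X`, converging
uniformly (as `t → 1⁻`) to continuous maps `Glim` and `Rlim` respectively.
If `f` maps each fiber of `Glim` into a fiber of `Rlim`, then
`f_t := R t ∘ f ∘ (G t)⁻¹` converges uniformly, as `t → 1⁻`, to a continuous
map `F` with `F ∘ Glim = Rlim ∘ f`. -/
theorem stmt0 {X : Type*} [MetricSpace X] [CompactSpace X]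
    (f : X → X) (hf : Continuous f) (hfs : Function.Surjective f)
    (G R : ℝ → (X ≃ₜ X)) (Glim Rlim : X → X)
    (hGlim : Continuous Glim) (hRlim : Continuous Rlim)
    (hG : TendstoUniformly (fun t x => G t x) Glim (𝓝[Set.Ico (0:ℝ) 1] 1))
    (hR : TendstoUniformly (fun t x => R t x) Rlim (𝓝[Set.Ico (0:ℝ) 1] 1))
    (hfib : ∀ x y : X, Glim x = Glim y → Rlim (f x) = Rlim (f y)) :
    ∃ F : X → X, Continuous F ∧
      TendstoUniformly (fun t x => R t (f ((G t).symm x))) F (𝓝[Set.Ico (0:ℝ) 1] 1) ∧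
      F ∘ Glim = Rlim ∘ f :=
  stmt0_general f hf G R Glim Rlim hGlim hRlim hG hR hfib
end

section
/- Let f₀(z) = 2 − log 2 + 2z − exp(z) and H = {z ∈ ℂ : Re z < −2}. Then for every z ∈ H one has Re(f₀(z)) < Re(z) − 1/2; consequently f₀(H) ⊆ H, for every z ∈ H and every n ∈ ℕ one has Re(f₀^[n](z)) ≤ Re(z) − n/2 (so the iterates f₀^[n] tend to ∞ uniformly on H), and H is contained in the Fatou set of f₀. -/
open Filter Topology

/-- The chordal (spherical) distance on `ℂ`. -/
noncomputable def chordalDist (a b : ℂ) : ℝ :=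
  2 * ‖a - b‖ /
    (Real.sqrt (1 + ‖a‖ ^ 2) * Real.sqrt (1 + ‖b‖ ^ 2))

/-- The Fatou set of `f`: points having a neighborhood on which the family of
iterates of `f` is uniformly equicontinuous with respect to the chordal distance. -/
def fatouSet (f : ℂ → ℂ) : Set ℂ :=
  {z | ∃ V ∈ 𝓝 z, ∀ ε : ℝ, 0 < ε → ∃ δ : ℝ, 0 < δ ∧
    ∀ x ∈ V, ∀ y ∈ V, chordalDist x y < δ →
      ∀ n : ℕ, chordalDist (f^[n] x) (f^[n] y) < ε}

/-- The Julia set of `f`. -/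
def juliaSet (f : ℂ → ℂ) : Set ℂ := (fatouSet f)ᶜ

/-- A Fatou component: a connected component of the Fatou set. -/
def IsFatouComponent (f : ℂ → ℂ) (U : Set ℂ) : Prop :=
  ∃ z ∈ fatouSet f, U = connectedComponentIn (fatouSet f) z

/-- A transcendental entire function: entire and not a polynomial. -/
def TranscendentalEntire (f : ℂ → ℂ) : Prop :=
  Differentiable ℂ f ∧ ¬ ∃ p : Polynomial ℂ, ∀ z, f z = p.eval z

/-- `U` is a `p`-periodic Baker domain of `f`: a Fatou component with
`f^[p](U) ⊆ U` on which the iterates `f^[n*p]` tend to `∞` locally uniformly. -/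
def IsBakerDomain (f : ℂ → ℂ) (p : ℕ) (U : Set ℂ) : Prop :=
  IsFatouComponent f U ∧ 1 ≤ p ∧ f^[p] '' U ⊆ U ∧
    ∀ K : Set ℂ, K ⊆ U → IsCompact K → ∀ R : ℝ, 0 < R →
      ∃ N : ℕ, ∀ n ≥ N, ∀ z ∈ K, R < ‖f^[n * p] z‖

/-- `ζ` is accessible from `U`: some curve in `U` lands at `ζ`. -/
def AccessibleFrom (U : Set ℂ) (ζ : ℂ) : Prop :=
  ∃ γ : ℝ → ℂ, ContinuousOn γ (Set.Ico 0 1) ∧ (∀ t ∈ Set.Ico (0:ℝ) 1, γ t ∈ U) ∧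
    Tendsto γ (𝓝[Set.Ico (0:ℝ) 1] 1) (𝓝 ζ)

/-- The set of critical values of `f`. -/
def criticalValues (f : ℂ → ℂ) : Set ℂ := {w | ∃ c : ℂ, deriv f c = 0 ∧ f c = w}

/-- The set of finite asymptotic values of `f`. -/
def asymptoticValues (f : ℂ → ℂ) : Set ℂ :=
  {a | ∃ γ : ℝ → ℂ, ContinuousOn γ (Set.Ici 0) ∧
    Tendsto (fun t => ‖γ t‖) atTop atTop ∧
    Tendsto (fun t => f (γ t)) atTop (𝓝 a)}

/-- `Sing(f⁻¹)`: the closure of the union of critical and finite asymptotic values. -/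
def singInv (f : ℂ → ℂ) : Set ℂ := closure (criticalValues f ∪ asymptoticValues f)

/-- The postsingular set `P(f)`. -/
def postSingular (f : ℂ → ℂ) : Set ℂ := closure (⋃ n : ℕ, f^[n] '' singInv f)

/-- `f` is semihyperbolic at `a`: there are `r > 0` and `N` such that for all `n`,
on each connected component of `(f^[n])⁻¹(D_r(a))` the map `f^[n]` is proper onto
`D_r(a)` with all fibers of cardinality at most `N`. -/
def SemihyperbolicAt (f : ℂ → ℂ) (a : ℂ) : Prop :=
  ∃ r : ℝ, 0 < r ∧ ∃ N : ℕ,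
    ∀ n : ℕ, ∀ z : ℂ, f^[n] z ∈ Metric.ball a r →
      (∀ K : Set ℂ, K ⊆ Metric.ball a r → IsCompact K →
        IsCompact (connectedComponentIn ((f^[n]) ⁻¹' Metric.ball a r) z ∩ (f^[n]) ⁻¹' K)) ∧
      (∀ w ∈ Metric.ball a r,
        (connectedComponentIn ((f^[n]) ⁻¹' Metric.ball a r) z ∩ (f^[n]) ⁻¹' {w}).Finite ∧
        (connectedComponentIn ((f^[n]) ⁻¹' Metric.ball a r) z ∩ (f^[n]) ⁻¹' {w}).ncard ≤ N)

/-- A wandering domain: a Fatou component whose forward images lie in pairwise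
distinct Fatou components. -/
def IsWanderingDomain (f : ℂ → ℂ) (W : Set ℂ) : Prop :=
  IsFatouComponent f W ∧ ∀ z ∈ W, ∀ m n : ℕ, m ≠ n →
    connectedComponentIn (fatouSet f) (f^[m] z) ≠ connectedComponentIn (fatouSet f) (f^[n] z)

/-- An arc in `U` with endpoints `a` and `b`: the image of an injective continuous
map `(0,1) → U` admitting the limits `a` and `b` at the two ends. -/
def IsArcWithEndpoints (U : Set ℂ) (lam : Set ℂ) (a b : ℂ) : Prop :=
  ∃ c : ℝ → ℂ, ContinuousOn c (Set.Ioo 0 1) ∧ Set.InjOn c (Set.Ioo 0 1) ∧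
    c '' Set.Ioo 0 1 = lam ∧ lam ⊆ U ∧
    Tendsto c (𝓝[Set.Ioo (0:ℝ) 1] 0) (𝓝 a) ∧
    Tendsto c (𝓝[Set.Ioo (0:ℝ) 1] 1) (𝓝 b)

/-- The Bergweiler function `f₀(z) = 2 - log 2 + 2z - e^z`. -/
noncomputable def f₀ : ℂ → ℂ := fun z => 2 - Real.log 2 + 2 * z - Complex.exp z

/-! On `H = {z | Re z < -2}` one has `Re f₀(z) ≤ 2 - log 2 + 2 Re z + e^{Re z}`, and
`Re z + e^{Re z} < -2 + e^{-2} < log 2 - 5/2`, so every application of `f₀` moves a point of `H`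
at least `1/2` to the left. The iterates therefore tend to `∞` uniformly on `H`, where the chordal
distance of any two of their values is small. Only finitely many iterates remain to be
controlled, and these are Lipschitz on `H` because `|f₀'| = |2 - e^z| ≤ 3` there and `f₀ H ⊆ H`;
since the chordal and Euclidean metrics are comparable on bounded sets, this gives
equicontinuity. -/

open Set NNReal

theorem LipschitzOnWith.iterate {α : Type*} [PseudoEMetricSpace α] {f : α → α} {s : Set α}
    {K : ℝ≥0} (hf : LipschitzOnWith K f s) (hmaps : MapsTo f s s) :
    ∀ n : ℕ, LipschitzOnWith (K ^ n) f^[n] s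
  | 0 => by simpa using LipschitzWith.id.lipschitzOnWith
  | n + 1 => by
    rw [pow_succ, Function.iterate_succ]
    exact (hf.iterate hmaps n).comp hf hmaps

lemma one_le_sqrt_one_add_sq (t : ℝ) : 1 ≤ √(1 + t ^ 2) :=
  (Real.le_sqrt' one_pos).2 (by nlinarith)

lemma le_sqrt_one_add_sq {t : ℝ} (ht : 0 ≤ t) : t ≤ √(1 + t ^ 2) :=
  (Real.le_sqrt ht (by positivity)).2 (by linarith)

lemma chordalDist_le_two_mul_norm_sub (a b : ℂ) : chordalDist a b ≤ 2 * ‖a - b‖ :=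
  div_le_self (by positivity) <|
    one_le_mul_of_one_le_of_one_le (one_le_sqrt_one_add_sq _) (one_le_sqrt_one_add_sq _)

lemma chordalDist_lt_of_lt_norm {a b : ℂ} {R : ℝ} (hR : 0 < R) (ha : R < ‖a‖) (hb : R < ‖b‖) :
    chordalDist a b < 4 / R := by
  have hSa := le_sqrt_one_add_sq (norm_nonneg a)
  have hSb := le_sqrt_one_add_sq (norm_nonneg b)
  have hprod : ‖a‖ * ‖b‖ ≤ √(1 + ‖a‖ ^ 2) * √(1 + ‖b‖ ^ 2) :=
    mul_le_mul hSa hSb (norm_nonneg b) (by positivity)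
  have htri : ‖a - b‖ ≤ ‖a‖ + ‖b‖ := norm_sub_le a b
  unfold chordalDist
  rw [div_lt_div_iff₀ (by positivity) hR]
  nlinarith [mul_lt_mul_of_pos_left hb (hR.trans ha), mul_lt_mul_of_pos_right ha (hR.trans hb)]

lemma norm_sub_le_mul_chordalDist {a b : ℂ} {M : ℝ} (ha : ‖a‖ ≤ M) (hb : ‖b‖ ≤ M) :
    ‖a - b‖ ≤ (1 + M ^ 2) / 2 * chordalDist a b := by
  have hS : ∀ c : ℂ, ‖c‖ ≤ M → √(1 + ‖c‖ ^ 2) ≤ √(1 + M ^ 2) := fun c hc =>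
    Real.sqrt_le_sqrt (by nlinarith [norm_nonneg c])
  have hprod : √(1 + ‖a‖ ^ 2) * √(1 + ‖b‖ ^ 2) ≤ 1 + M ^ 2 := by
    rw [← Real.mul_self_sqrt (by positivity : (0 : ℝ) ≤ 1 + M ^ 2)]
    exact mul_le_mul (hS a ha) (hS b hb) (by positivity) (by positivity)
  have hpos : 0 < √(1 + ‖a‖ ^ 2) * √(1 + ‖b‖ ^ 2) := by positivity
  calc ‖a - b‖ = √(1 + ‖a‖ ^ 2) * √(1 + ‖b‖ ^ 2) / 2 * chordalDist a b := by
        unfold chordalDist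
        field_simp
    _ ≤ (1 + M ^ 2) / 2 * chordalDist a b := by
        have : 0 ≤ chordalDist a b := by unfold chordalDist; positivity
        gcongr

theorem subset_fatouSet_of_lipschitzOnWith {f : ℂ → ℂ} {U : Set ℂ} {K : ℝ≥0} (hU : IsOpen U)
    (hmaps : MapsTo f U U) (hf : LipschitzOnWith K f U)
    (hesc : ∀ R : ℝ, ∃ N : ℕ, ∀ n ≥ N, ∀ z ∈ U, R < ‖f^[n] z‖) : U ⊆ fatouSet f := by
  intro z hz
  obtain ⟨r, hr, hball⟩ := Metric.isOpen_iff.1 hU z hz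
  refine ⟨Metric.ball z r, Metric.ball_mem_nhds z hr, fun ε hε => ?_⟩
  obtain ⟨N, hN⟩ := hesc (4 / ε)
  set M := ‖z‖ + r
  have hM : ∀ x ∈ Metric.ball z r, ‖x‖ ≤ M := fun x hx =>
    norm_le_of_mem_closedBall (Metric.ball_subset_closedBall hx)
  set C := (1 + K : ℝ) ^ N * (1 + M ^ 2)
  have hC : 0 < C := by positivity
  refine ⟨ε / C, by positivity, fun x hx y hy hxy n => ?_⟩
  rcases le_or_gt N n with hn | hn
  · simpa [div_div_cancel₀ hε.ne'] using
      chordalDist_lt_of_lt_norm (by positivity) (hN n hn x (hball hx)) (hN n hn y (hball hy))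
  · have hlip : ‖f^[n] x - f^[n] y‖ ≤ K ^ n * ‖x - y‖ := by
      simpa [dist_eq_norm] using ((hf.iterate hmaps n).dist_le_mul x (hball hx) y (hball hy))
    have hpow : (K : ℝ) ^ n ≤ (1 + K) ^ N :=
      (pow_le_pow_left₀ K.2 (by simp) n).trans (pow_le_pow_right₀ (by simp) hn.le)
    calc chordalDist (f^[n] x) (f^[n] y) ≤ 2 * ‖f^[n] x - f^[n] y‖ :=
          chordalDist_le_two_mul_norm_sub _ _
      _ ≤ 2 * ((1 + K) ^ N * ((1 + M ^ 2) / 2 * chordalDist x y)) := by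
          grw [hlip, hpow, norm_sub_le_mul_chordalDist (hM x hx) (hM y hy)]
      _ = C * chordalDist x y := by ring
      _ < C * (ε / C) := by gcongr
      _ = ε := mul_div_cancel₀ ε hC.ne'

lemma re_f₀ (z : ℂ) :
    (f₀ z).re = 2 - Real.log 2 + 2 * z.re - Real.exp z.re * Real.cos z.im := by
  simp [f₀, Complex.exp_re, Complex.log_re]

lemma exp_neg_two_lt_log_two_sub_half : Real.exp (-2) < Real.log 2 - 1 / 2 := by
  have hlog : (0.6931471803 : ℝ) < Real.log 2 := Real.log_two_gt_d9
  have he : (2.7182818283 : ℝ) < Real.exp 1 := Real.exp_one_gt_d9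
  rw [show (-2 : ℝ) = -(1 + 1) by norm_num, Real.exp_neg, Real.exp_add,
    inv_lt_iff_one_lt_mul₀ (by positivity)]
  nlinarith

lemma re_f₀_lt {z : ℂ} (hz : z.re < -2) : (f₀ z).re < z.re - 1 / 2 := by
  have hcos : Real.exp z.re * -1 ≤ Real.exp z.re * Real.cos z.im :=
    mul_le_mul_of_nonneg_left (Real.neg_one_le_cos _) (Real.exp_pos _).le
  have hexp : Real.exp z.re < Real.exp (-2) := Real.exp_lt_exp.2 hz
  rw [re_f₀]
  linarith [exp_neg_two_lt_log_two_sub_half]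

lemma mapsTo_f₀ : MapsTo f₀ {z : ℂ | z.re < -2} {z : ℂ | z.re < -2} := fun z (hz : z.re < -2) =>
  show (f₀ z).re < -2 by linarith [re_f₀_lt hz]

lemma re_iterate_f₀_le {z : ℂ} (hz : z.re < -2) (n : ℕ) : (f₀^[n] z).re ≤ z.re - n / 2 := by
  induction n with
  | zero => simp
  | succ n ih =>
    rw [Function.iterate_succ_apply']
    have := re_f₀_lt (mapsTo_f₀.iterate n hz)
    push_cast
    linarith

lemma lt_norm_iterate_f₀ {z : ℂ} (hz : z.re < -2) (n : ℕ) : n / 2 + 2 < ‖f₀^[n] z‖ := by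
  have hre : -(f₀^[n] z).re ≤ ‖f₀^[n] z‖ := (neg_le_abs _).trans (Complex.abs_re_le_norm _)
  linarith [re_iterate_f₀_le hz n]

lemma exists_forall_lt_norm_iterate_f₀ (R : ℝ) :
    ∃ N : ℕ, ∀ n ≥ N, ∀ z : ℂ, z.re < -2 → R < ‖f₀^[n] z‖ := by
  refine ⟨⌈2 * R⌉₊, fun n hn z hz => ?_⟩
  have hR : 2 * R ≤ n := (Nat.le_ceil _).trans (by exact_mod_cast hn)
  linarith [lt_norm_iterate_f₀ hz n]

lemma lipschitzOnWith_f₀ : LipschitzOnWith 3 f₀ {z : ℂ | z.re < -2} := by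
  have hderiv (z : ℂ) : HasDerivAt f₀ (2 - Complex.exp z) z := by
    have h : HasDerivAt f₀ (0 + 2 * 1 - Complex.exp z) z :=
      ((hasDerivAt_const z _).add ((hasDerivAt_id z).const_mul 2)).sub (Complex.hasDerivAt_exp z)
    simpa using h
  refine (convex_halfSpace_re_lt (-2)).lipschitzOnWith_of_nnnorm_hasDerivWithin_le
    (fun z _ => (hderiv z).hasDerivWithinAt) fun z hz => ?_
  have hexp : Real.exp z.re ≤ 1 := Real.exp_le_one_iff.2 ((show z.re < -2 from hz).le.trans (by norm_num))
  rw [← NNReal.coe_le_coe, coe_nnnorm]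
  calc ‖2 - Complex.exp z‖ ≤ ‖(2 : ℂ)‖ + ‖Complex.exp z‖ := norm_sub_le _ _
    _ ≤ 3 := by rw [Complex.norm_exp]; norm_num; linarith

/-- On the half-plane `H = {Re z < -2}` one has
`Re (f₀ z) < Re z - 1/2`; hence `f₀ H ⊆ H`, the iterates satisfy
`Re (f₀^[n] z) ≤ Re z - n/2` (so `f₀^[n] → ∞` uniformly on `H`), and
`H` is contained in the Fatou set of `f₀`. -/
theorem stmt7 :
    (∀ z : ℂ, z.re < -2 → (f₀ z).re < z.re - 1 / 2) ∧
    (∀ z : ℂ, z.re < -2 → (f₀ z).re < -2) ∧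
    (∀ z : ℂ, z.re < -2 → ∀ n : ℕ, (f₀^[n] z).re ≤ z.re - n / 2) ∧
    (∀ R : ℝ, ∃ N : ℕ, ∀ n ≥ N, ∀ z : ℂ, z.re < -2 → R < ‖f₀^[n] z‖) ∧
    {z : ℂ | z.re < -2} ⊆ fatouSet f₀ :=
  ⟨fun _ => re_f₀_lt, fun _ hz => mapsTo_f₀ hz, fun _ => re_iterate_f₀_le,
    exists_forall_lt_norm_iterate_f₀,
    subset_fatouSet_of_lipschitzOnWith (isOpen_lt Complex.continuous_re continuous_const)
      mapsTo_f₀ lipschitzOnWith_f₀ exists_forall_lt_norm_iterate_f₀⟩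
end

section
/- Let f₀(z) = 2 − log 2 + 2z − exp(z). Then the set of critical points {z ∈ ℂ : f₀'(z) = 0} equals {log 2 + 2πik : k ∈ ℤ}, and for every k ∈ ℤ and every n ≥ 1 one has f₀^[n](log 2 + 2πik) = log 2 + 2ⁿ·2πik. In particular, the forward orbit under f₀ of every critical value of f₀ is contained in the set {log 2 + 2πim : m ∈ ℤ}. -/
open Filter Topology

/-!
Since `f₀' = 2 - exp`, the critical points are the solutions of `exp z = 2`. On that set
`f₀ z = 2z - log 2`, so `exp (f₀ z) = exp z ^ 2 / 2 = 2`: the critical points are invariant,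
and there `f₀` is the doubling map `z ↦ log 2 + 2 (z - log 2)` centred at `log 2`.
-/

open Complex

lemma deriv_f₀ (z : ℂ) : deriv f₀ z = 2 - exp z := by
  have h : HasDerivAt f₀ (0 + 2 * 1 - exp z) z :=
    ((hasDerivAt_const z ((2 : ℂ) - Real.log 2)).add ((hasDerivAt_id z).const_mul 2)).sub
      (hasDerivAt_exp z)
  simpa using h.deriv

lemma deriv_f₀_eq_zero_iff (z : ℂ) : deriv f₀ z = 0 ↔ exp z = 2 := by
  rw [deriv_f₀, sub_eq_zero, eq_comm]

lemma exp_ofReal_log_two : exp (Real.log 2 : ℂ) = 2 := by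
  rw [← ofReal_exp, Real.exp_log two_pos, ofReal_ofNat]

lemma exp_eq_two_iff (z : ℂ) :
    exp z = 2 ↔ ∃ k : ℤ, z = (Real.log 2 : ℂ) + (2 * Real.pi : ℝ) * I * (k : ℂ) := by
  rw [← exp_ofReal_log_two, exp_eq_exp_iff_exists_int]
  refine exists_congr fun k => ?_
  push_cast
  ring_nf

lemma f₀_of_exp_eq_two {z : ℂ} (hz : exp z = 2) :
    f₀ z = Real.log 2 + 2 * (z - Real.log 2) := by
  rw [f₀, hz]
  ring

lemma mapsTo_f₀_exp_eq_two : Set.MapsTo f₀ {z | exp z = 2} {z | exp z = 2} := by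
  intro z (hz : exp z = 2)
  show exp (f₀ z) = 2
  have hf : f₀ z = z + z - Real.log 2 := by rw [f₀_of_exp_eq_two hz]; ring
  rw [hf, exp_sub, exp_add, hz, exp_ofReal_log_two]
  norm_num

lemma iterate_f₀_of_exp_eq_two (n : ℕ) {z : ℂ} (hz : exp z = 2) :
    f₀^[n] z = Real.log 2 + 2 ^ n * (z - Real.log 2) := by
  induction n generalizing z with
  | zero => simp
  | succ n ih =>
    rw [Function.iterate_succ_apply, ih (mapsTo_f₀_exp_eq_two hz), f₀_of_exp_eq_two hz]
    ring

/-- The critical points of `f₀` are exactly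
`log 2 + 2πik`, `k ∈ ℤ`; one has `f₀^[n](log 2 + 2πik) = log 2 + 2ⁿ·2πik`
for `n ≥ 1`; in particular the forward orbit of every critical value of `f₀`
stays in `{log 2 + 2πim : m ∈ ℤ}`. -/
theorem stmt8 :
    ({z : ℂ | deriv f₀ z = 0} =
      {z : ℂ | ∃ k : ℤ, z = (Real.log 2 : ℂ) + (2 * Real.pi : ℝ) * Complex.I * (k : ℂ)}) ∧
    (∀ k : ℤ, ∀ n : ℕ, 1 ≤ n →
      f₀^[n] ((Real.log 2 : ℂ) + (2 * Real.pi : ℝ) * Complex.I * (k : ℂ)) =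
        (Real.log 2 : ℂ) + (2 : ℂ) ^ n * ((2 * Real.pi : ℝ) * Complex.I * (k : ℂ))) ∧
    (∀ c : ℂ, deriv f₀ c = 0 → ∀ n : ℕ, ∃ m : ℤ,
      f₀^[n] (f₀ c) = (Real.log 2 : ℂ) + (2 * Real.pi : ℝ) * Complex.I * (m : ℂ)) := by
  refine ⟨Set.ext fun z => (deriv_f₀_eq_zero_iff z).trans (exp_eq_two_iff z), ?_, ?_⟩
  · intro k n _
    rw [iterate_f₀_of_exp_eq_two n ((exp_eq_two_iff _).2 ⟨k, rfl⟩), add_sub_cancel_left]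
  · intro c hc n
    have hc : exp c = 2 := (deriv_f₀_eq_zero_iff c).1 hc
    exact (exp_eq_two_iff _).1 ((mapsTo_f₀_exp_eq_two.iterate n) (mapsTo_f₀_exp_eq_two hc))
end

section
/- The entire function f₀(z) = 2 − log 2 + 2z − exp(z) has no finite asymptotic values: there exist no a ∈ ℂ and no continuous curve γ : [0,∞) → ℂ with |γ(t)| → ∞ and f₀(γ(t)) → a as t → ∞. -/
open Filter Topology

/-! If `f₀ (γ t) → a`, then `h = exp z - 2z` stays bounded along `z = γ t`, so
`|exp z| ≈ 2|z|`. Hence `Re z → ∞`, which forces `|Im z| → ∞` and, comparing real parts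
in `exp z = h + 2z`, `cos (Im z) → 0`. But a continuous real curve going to `±∞` passes
through infinitely many multiples of `π`, where `|cos| = 1`. -/

lemma Real.tendsto_mul_add_div_exp_atTop_nhds_zero (b c : ℝ) :
    Tendsto (fun s => (b * s + c) / Real.exp s) atTop (𝓝 0) := by
  have h := ((by simpa using Real.tendsto_pow_mul_exp_neg_atTop_nhds_zero 1 :
      Tendsto (fun s => s * Real.exp (-s)) atTop (𝓝 0)).const_mul b).add
    (Real.tendsto_exp_neg_atTop_nhds_zero.const_mul c)
  simp only [mul_zero, add_zero] at h
  refine h.congr fun s => ?_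
  rw [Real.exp_neg]
  ring

section ExpSubTwoMul

open Complex

lemma norm_le_exp_re_of_norm_exp_sub_two_mul_le {z : ℂ} {C : ℝ}
    (hC : ‖exp z - 2 * z‖ ≤ C) (hz : C ≤ ‖z‖) : ‖z‖ ≤ Real.exp z.re := by
  have : ‖2 * z‖ ≤ ‖exp z - 2 * z‖ + ‖exp z‖ := by
    simpa only [norm_sub_rev] using norm_le_norm_sub_add (2 * z) (exp z)
  rw [norm_mul, norm_exp] at this
  norm_num at this
  linarith

lemma exp_re_le_three_mul_norm_of_norm_exp_sub_two_mul_le {z : ℂ} {C : ℝ}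
    (hC : ‖exp z - 2 * z‖ ≤ C) (hz : C ≤ ‖z‖) : Real.exp z.re ≤ 3 * ‖z‖ := by
  have : ‖exp z‖ ≤ ‖exp z - 2 * z‖ + ‖2 * z‖ := norm_le_norm_sub_add _ _
  rw [norm_mul, norm_exp] at this
  norm_num at this
  linarith

lemma exp_re_mul_abs_cos_im_le {z : ℂ} {C : ℝ} (hC : ‖exp z - 2 * z‖ ≤ C) :
    Real.exp z.re * |Real.cos z.im| ≤ 2 * |z.re| + C := by
  have hre : Real.exp z.re * Real.cos z.im = (exp z - 2 * z).re + 2 * z.re := by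
    simp [exp_re]
  calc Real.exp z.re * |Real.cos z.im|
      = |(exp z - 2 * z).re + 2 * z.re| := by
        rw [← hre, abs_mul, abs_of_pos (Real.exp_pos _)]
    _ ≤ |(exp z - 2 * z).re| + |2 * z.re| := abs_add_le _ _
    _ ≤ 2 * |z.re| + C := by
        rw [abs_mul, abs_two]
        linarith [abs_re_le_norm (exp z - 2 * z)]

variable {α : Type*} {l : Filter α} {w : α → ℂ} {C : ℝ}

lemma tendsto_re_atTop_of_norm_exp_sub_two_mul_le (hw : Tendsto (‖w ·‖) l atTop)
    (hC : ∀ᶠ a in l, ‖exp (w a) - 2 * w a‖ ≤ C) :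
    Tendsto (fun a => (w a).re) l atTop := by
  refine tendsto_atTop_mono' _ ?_ (Real.tendsto_log_atTop.comp hw)
  filter_upwards [hC, hw.eventually_ge_atTop C, hw.eventually_gt_atTop 0] with a ha hCw hw0
  exact (Real.log_le_iff_le_exp hw0).2 (norm_le_exp_re_of_norm_exp_sub_two_mul_le ha hCw)

lemma tendsto_abs_im_atTop_of_norm_exp_sub_two_mul_le (hw : Tendsto (‖w ·‖) l atTop)
    (hC : ∀ᶠ a in l, ‖exp (w a) - 2 * w a‖ ≤ C) :
    Tendsto (fun a => |(w a).im|) l atTop := by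
  have hre := tendsto_re_atTop_of_norm_exp_sub_two_mul_le hw hC
  refine tendsto_atTop_mono' _ ?_ (tendsto_atTop_add_const_right _ (-6) hre)
  filter_upwards [hC, hw.eventually_ge_atTop C, hre.eventually_ge_atTop 0] with a ha hCw hx
  have hexp := exp_re_le_three_mul_norm_of_norm_exp_sub_two_mul_le ha hCw
  have hquad := Real.quadratic_le_exp_of_nonneg hx
  have hnorm := norm_le_abs_re_add_abs_im (w a)
  rw [abs_of_nonneg hx] at hnorm
  -- `1 + x + x²/2 ≤ exp x ≤ 3‖w‖ ≤ 3x + 3|Im w|` for `x = Re w ≥ 0`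
  nlinarith [sq_nonneg ((w a).re - 5)]

lemma tendsto_cos_im_of_norm_exp_sub_two_mul_le (hw : Tendsto (‖w ·‖) l atTop)
    (hC : ∀ᶠ a in l, ‖exp (w a) - 2 * w a‖ ≤ C) :
    Tendsto (fun a => Real.cos (w a).im) l (𝓝 0) := by
  have hre := tendsto_re_atTop_of_norm_exp_sub_two_mul_le hw hC
  refine squeeze_zero_norm' ?_ ((Real.tendsto_mul_add_div_exp_atTop_nhds_zero 2 C).comp hre)
  filter_upwards [hC, hre.eventually_ge_atTop 0] with a ha hx
  have h := exp_re_mul_abs_cos_im_le ha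
  rw [abs_of_nonneg hx] at h
  rwa [Real.norm_eq_abs, Function.comp_apply, le_div_iff₀ (Real.exp_pos _), mul_comm]

end ExpSubTwoMul

lemma exists_int_mul_mem_uIcc {p a b : ℝ} (hp : 0 < p) (hab : p ≤ |b - a|) :
    ∃ k : ℤ, k * p ∈ Set.uIcc a b := by
  refine ⟨⌈min a b / p⌉, ?_, ?_⟩
  · exact (div_le_iff₀ hp).1 (Int.le_ceil _)
  · have hlt : (⌈min a b / p⌉ : ℝ) * p < min a b + p := by
      rw [← lt_div_iff₀ hp, add_div, div_self hp.ne']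
      exact Int.ceil_lt_add_one _
    linarith [max_sub_min_eq_abs a b]

lemma frequently_exists_int_mul_eq_of_tendsto_abs {y : ℝ → ℝ} {p : ℝ}
    (hy : ContinuousOn y (Set.Ici 0)) (hy_abs : Tendsto (|y ·|) atTop atTop) (hp : 0 < p) :
    ∃ᶠ t in atTop, ∃ k : ℤ, y t = k * p := by
  rw [frequently_atTop]
  intro T
  set T₀ := max T 0
  obtain ⟨T₁, hT₁_big, hT₀T₁⟩ :=
    ((hy_abs.eventually_gt_atTop (|y T₀| + p)).and (eventually_ge_atTop T₀)).exists
  have hgap : p ≤ |y T₁ - y T₀| := by linarith [abs_sub_abs_le_abs_sub (y T₁) (y T₀)]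
  obtain ⟨k, hk⟩ := exists_int_mul_mem_uIcc hp hgap
  have hsub : Set.uIcc T₀ T₁ ⊆ Set.Ici 0 := by
    rw [Set.uIcc_of_le hT₀T₁]
    exact fun t ht => (le_max_right T 0).trans ht.1
  obtain ⟨t, ht, hyt⟩ := intermediate_value_uIcc (hy.mono hsub) hk
  rw [Set.uIcc_of_le hT₀T₁] at ht
  exact ⟨t, (le_max_left T 0).trans ht.1, k, hyt⟩

/-- `f₀` has no finite asymptotic values. -/
theorem stmt9 : ¬ ∃ a : ℂ, ∃ γ : ℝ → ℂ, ContinuousOn γ (Set.Ici 0) ∧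
    Tendsto (fun t => ‖γ t‖) atTop atTop ∧
    Tendsto (fun t => f₀ (γ t)) atTop (𝓝 a) := by
  rintro ⟨a, γ, hγ, hγ_norm, hf₀⟩
  set b : ℂ := 2 - Real.log 2 - a
  have hbdd : ∀ᶠ t in atTop, ‖Complex.exp (γ t) - 2 * γ t‖ ≤ ‖b‖ + 1 := by
    have h : Tendsto (fun t => Complex.exp (γ t) - 2 * γ t) atTop (𝓝 b) :=
      (tendsto_const_nhds.sub hf₀).congr fun t => by simp only [f₀]; ring
    exact h.norm.eventually (eventually_le_nhds (lt_add_one _))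
  have hcos := (tendsto_cos_im_of_norm_exp_sub_two_mul_le hγ_norm hbdd).eventually
    (Metric.ball_mem_nhds 0 one_pos)
  have hπ := frequently_exists_int_mul_eq_of_tendsto_abs
    (Complex.continuous_im.comp_continuousOn hγ)
    (tendsto_abs_im_atTop_of_norm_exp_sub_two_mul_le hγ_norm hbdd) Real.pi_pos
  obtain ⟨t, ⟨k, hk⟩, hlt⟩ := (hπ.and_eventually hcos).exists
  rw [Function.comp_apply] at hk
  rw [hk, Real.dist_0_eq_abs, Real.abs_cos_int_mul_pi] at hlt
  exact lt_irrefl _ hlt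
end

section
/- Let f₀(z) = 2 − log 2 + 2z − exp(z). Then there exists a real number x₀ with −1 < x₀ < −9/10 such that f₀(x₀) = x₀ and the derivative f₀'(x₀) = 2 − e^{x₀} satisfies 3/2 < f₀'(x₀) < 2 (so x₀ is a repelling fixed point of f₀); moreover f₀(x₀ + 2πik) = x₀ + 4πik for every k ∈ ℤ. -/
open Filter Topology

/-! A real fixed point of `f₀` is a solution of `eˣ = 2 - log 2 + x`; the intermediate value
theorem finds one in `(-1, -9/10)`, where `eˣ < 1/2` makes it repelling. Since `f₀ (z + w) =
f₀ z + 2w` whenever `eʷ = 1`, the translate `x₀ + 2πik` is sent to `x₀ + 4πik`. -/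

lemma exp_neg_nine_tenths_lt : Real.exp (-(9 / 10)) < 0.40661 := by
  have h := Real.sum_le_exp_of_nonneg (by norm_num : (0 : ℝ) ≤ 9 / 10) 8
  simp only [Finset.sum_range_succ, Finset.sum_range_zero, Nat.factorial] at h
  rw [Real.exp_neg, inv_lt_comm₀ (Real.exp_pos _) (by norm_num)]
  norm_num at h ⊢
  linarith

lemma exists_exp_eq_two_sub_log_two_add :
    ∃ x ∈ Set.Ioo (-1 : ℝ) (-(9 / 10)), Real.exp x = 2 - Real.log 2 + x := by
  set g : ℝ → ℝ := fun x => 2 - Real.log 2 + x - Real.exp x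
  have hg : Continuous g := by fun_prop
  have hlog_lt := Real.log_two_lt_d9
  have hlog_gt := Real.log_two_gt_d9
  have hg_left : g (-1) < 0 := by
    have := Real.exp_neg_one_gt_d9
    simp only [g]; norm_num at *; linarith
  -- `g (-9/10) ≈ 2 · 10⁻⁴`, hence the five-digit bound on `exp (-9/10)`.
  have hg_right : 0 < g (-(9 / 10)) := by
    have := exp_neg_nine_tenths_lt
    simp only [g]; norm_num at *; linarith
  obtain ⟨x, hx, hgx⟩ :=
    intermediate_value_Ioo (by norm_num) hg.continuousOn ⟨hg_left, hg_right⟩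
  exact ⟨x, hx, by simp only [g] at hgx; linarith⟩

lemma hasDerivAt_f₀ (z : ℂ) : HasDerivAt f₀ (2 - Complex.exp z) z := by
  have h := (((hasDerivAt_id z).const_mul (2 : ℂ)).const_add ((2 : ℂ) - Real.log 2)).sub
    (Complex.hasDerivAt_exp z)
  rwa [mul_one] at h

lemma f₀_add_of_exp_eq_one (z w : ℂ) (hw : Complex.exp w = 1) :
    f₀ (z + w) = f₀ z + 2 * w := by
  simp only [f₀, Complex.exp_add, hw, mul_one]
  ring

lemma f₀_ofReal_eq_self (x : ℝ) (hx : Real.exp x = 2 - Real.log 2 + x) : f₀ x = x := by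
  simp only [f₀, ← Complex.ofReal_exp, hx]
  push_cast
  ring

/-- `f₀` has a repelling real fixed point `x₀ ∈ (-1, -9/10)`
with `f₀'(x₀) = 2 - e^{x₀} ∈ (3/2, 2)`, and `f₀(x₀ + 2πik) = x₀ + 4πik` for all `k ∈ ℤ`. -/
theorem stmt12 : ∃ x₀ : ℝ, -1 < x₀ ∧ x₀ < -(9 / 10) ∧
    f₀ (x₀ : ℂ) = (x₀ : ℂ) ∧
    deriv f₀ (x₀ : ℂ) = ((2 - Real.exp x₀ : ℝ) : ℂ) ∧
    3 / 2 < 2 - Real.exp x₀ ∧ 2 - Real.exp x₀ < 2 ∧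
    ∀ k : ℤ, f₀ ((x₀ : ℂ) + (2 * Real.pi : ℝ) * Complex.I * (k : ℂ)) =
      (x₀ : ℂ) + (4 * Real.pi : ℝ) * Complex.I * (k : ℂ) := by
  obtain ⟨x₀, ⟨hx₀_gt, hx₀_lt⟩, hexp⟩ := exists_exp_eq_two_sub_log_two_add
  have hfix := f₀_ofReal_eq_self x₀ hexp
  have hexp_lt : Real.exp x₀ < 1 / 2 :=
    calc Real.exp x₀ < Real.exp (-(9 / 10)) := Real.exp_lt_exp.mpr hx₀_lt
      _ < 1 / 2 := exp_neg_nine_tenths_lt.trans (by norm_num)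
  refine ⟨x₀, hx₀_gt, hx₀_lt, hfix, ?_, by linarith, by linarith [Real.exp_pos x₀], fun k => ?_⟩
  · rw [(hasDerivAt_f₀ _).deriv, ← Complex.ofReal_exp]
    push_cast
    rfl
  · have hperiod : (2 * Real.pi : ℝ) * Complex.I * (k : ℂ) = k * (2 * Real.pi * Complex.I) := by
      push_cast; ring
    rw [hperiod, f₀_add_of_exp_eq_one _ _ (Complex.exp_int_mul_two_pi_mul_I k), hfix]
    push_cast
    ring
end
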